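/- arXiv:1010.4469 — 2 statements merged into one kernel-verified Lean document; each statement's English description precedes it below -/
import Mathlib

section
/- For any n ≥ 1, any positive integers i₁, …, iₙ and any positive integer i, the Lebesgue measure of the cylinder set {x ∈ (0,1) irrational : a₁(x)=i₁, …, aₙ(x)=iₙ, a_{n+1}(x)=i} equals P_i(s) times the Lebesgue measure of {x ∈ (0,1) irrational : a₁(x)=i₁, …, aₙ(x)=iₙ}, where s = [iₙ, i_{n-1}, …, i₁] is the finite continued fraction 1/(iₙ + 1/(i_{n-1} + ⋯ + 1/i₁)) and P_i(s) = (s+1)/((s+i)(s+i+1)). In particular, under Lebesgue measure the conditional probability that a_{n+1} = i given a₁, …, aₙ equals P_i(sₙ) with sₙ = [aₙ, …, a₁]. -/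
open MeasureTheory

/-- The Gauss map `τ(x) = 1/x − ⌊1/x⌋` (with `τ(0) = 0`, using `(0:ℝ)⁻¹ = 0`). -/
noncomputable def gaussMap (x : ℝ) : ℝ := Int.fract x⁻¹

/-- `cfDigit n x = ⌊1/τⁿ(x)⌋` is the `(n+1)`-st regular continued fraction digit
`a_{n+1}(x)` of `x`. -/
noncomputable def cfDigit (n : ℕ) (x : ℝ) : ℤ := ⌊(gaussMap^[n] x)⁻¹⌋

/-- The finite continued fraction `[x₁, …, xₙ] = 1/(x₁ + 1/(x₂ + ⋯ + 1/xₙ))`. -/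
noncomputable def cfVal : List ℕ+ → ℝ
  | [] => 0
  | a :: l => 1 / ((a : ℝ) + cfVal l)

/-!
Let `pₙ/qₙ`, `pₙ₋₁/qₙ₋₁` be the last two convergents of `[i₁, …, iₙ]`. An irrational `x ∈ (0, 1)`
satisfies `x = [a₁, …, aₙ₋₁, aₙ + τⁿ x]` with `τⁿ x ∈ (0, 1)`, so the irrational `x` with first
digits `i₁, …, iₙ` are exactly the irrationals strictly between `[i₁, …, iₙ] = pₙ/qₙ` and
`[i₁, …, iₙ + 1] = (pₙ + pₙ₋₁)/(qₙ + qₙ₋₁)`. Since `pₙ₋₁ qₙ - pₙ qₙ₋₁ = ±1`, this set has measure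
`1/(qₙ (qₙ + qₙ₋₁))`. Appending the digit `i` turns `(qₙ, qₙ₋₁)` into `(i qₙ + qₙ₋₁, qₙ)`, and
`[iₙ, …, i₁] = qₙ₋₁/qₙ`; the ratio of the two measures is then `P_i(qₙ₋₁/qₙ)`.
-/

open Set

theorem sub_mem_uIoo_iff {K : Type*} [AddCommGroup K] [LinearOrder K] [IsOrderedAddMonoid K]
    {y c u v : K} : y - c ∈ uIoo u v ↔ y ∈ uIoo (c + u) (c + v) := by
  simp only [uIoo, mem_Ioo, min_add_add_left, max_add_add_left, lt_sub_iff_add_lt',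
    sub_lt_iff_lt_add']

theorem inv_mem_uIoo_iff {K : Type*} [Field K] [LinearOrder K] [IsStrictOrderedRing K]
    {a b x : K} (ha : 0 < a) (hb : 0 < b) (hx : 0 < x) :
    x⁻¹ ∈ uIoo a b ↔ x ∈ uIoo a⁻¹ b⁻¹ := by
  wlog hab : a ≤ b generalizing a b
  · rw [uIoo_comm, this hb ha (le_of_not_ge hab), uIoo_comm]
  rw [uIoo_of_le hab, uIoo_of_ge ((inv_le_inv₀ hb ha).2 hab), mem_Ioo, mem_Ioo,
    lt_inv_comm₀ ha hx, inv_lt_comm₀ hx hb, and_comm]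

theorem floor_eq_and_fract_mem_iff {K : Type*} [Ring K] [LinearOrder K] [IsStrictOrderedRing K]
    [FloorRing K] {S : Set K} (hS : S ⊆ Ico 0 1) (y : K) (z : ℤ) :
    ⌊y⌋ = z ∧ Int.fract y ∈ S ↔ y - z ∈ S := by
  constructor
  · rintro ⟨rfl, hy⟩
    rwa [Int.self_sub_floor]
  · intro hy
    obtain ⟨h₀, h₁⟩ := hS hy
    have hfloor : ⌊y⌋ = z := Int.floor_eq_iff.2 ⟨sub_nonneg.1 h₀, sub_lt_iff_lt_add'.1 h₁⟩
    rw [← hfloor, Int.self_sub_floor] at hy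
    exact ⟨hfloor, hy⟩

theorem List.ofFn_snoc {α : Type*} {n : ℕ} (d : Fin n → α) (a : α) :
    List.ofFn (Fin.snoc d a : Fin (n + 1) → α) = List.ofFn d ++ [a] := by
  rw [List.ofFn_succ']
  simp

theorem volume_inter_setOf_irrational (s : Set ℝ) :
    volume (s ∩ {x | Irrational x}) = volume s := by
  refine measure_inter_conull ?_
  have : {x : ℝ | Irrational x}ᶜ = range ((↑) : ℚ → ℝ) := by ext; simp [Irrational]
  rw [this]
  exact (countable_range _).measure_zero _

theorem irrational_gaussMap {x : ℝ} (hx : Irrational x) : Irrational (gaussMap x) := by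
  rw [gaussMap, ← Int.self_sub_floor]
  exact hx.inv.sub_intCast _

theorem gaussMap_mem_Ioo {x : ℝ} (hx : Irrational x) : gaussMap x ∈ Ioo 0 1 :=
  ⟨Int.fract_pos.2 (hx.inv.ne_int _), Int.fract_lt_one _⟩

theorem cfDigit_zero (x : ℝ) : cfDigit 0 x = ⌊x⁻¹⌋ := rfl

theorem cfDigit_succ (k : ℕ) (x : ℝ) : cfDigit (k + 1) x = cfDigit k (gaussMap x) := by
  rw [cfDigit, cfDigit, Function.iterate_succ_apply]

theorem cfVal_nonneg (l : List ℕ+) : 0 ≤ cfVal l := by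
  cases l with
  | nil => exact le_rfl
  | cons a l => exact one_div_nonneg.2 (by positivity [cfVal_nonneg l])

/-- `cfInvBranch [a₁, …, aₙ] t = [a₁, …, aₙ₋₁, aₙ + t]`: on `[0, 1]`, the inverse of `τⁿ` on the
set of `x` with first digits `a₁, …, aₙ`. -/
noncomputable def cfInvBranch (l : List ℕ+) (t : ℝ) : ℝ :=
  l.foldr (fun (a : ℕ+) (y : ℝ) => ((a : ℝ) + y)⁻¹) t

theorem cfInvBranch_cons (a : ℕ+) (l : List ℕ+) (t : ℝ) :
    cfInvBranch (a :: l) t = ((a : ℝ) + cfInvBranch l t)⁻¹ := rfl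

theorem cfInvBranch_mem_Icc (l : List ℕ+) {t : ℝ} (ht : t ∈ Icc 0 1) :
    cfInvBranch l t ∈ Icc 0 1 := by
  induction l with
  | nil => exact ht
  | cons a l ih =>
    have ha : (1 : ℝ) ≤ (a : ℝ) := by exact_mod_cast a.pos
    rw [cfInvBranch_cons]
    exact ⟨inv_nonneg.2 (by linarith [ih.1]), inv_le_one_of_one_le₀ (by linarith [ih.1])⟩

/-- `pₙ, qₙ` and `pₙ₋₁, qₙ₋₁`, the numerators and denominators of the last two convergents. -/
structure Continuants where
  num : ℕ
  den : ℕ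
  prevNum : ℕ
  prevDen : ℕ

def continuants (l : List ℕ+) : Continuants :=
  l.foldl (fun c a => ⟨a * c.num + c.prevNum, a * c.den + c.prevDen, c.num, c.den⟩) ⟨0, 1, 1, 0⟩

@[simp]
theorem continuants_nil : continuants [] = ⟨0, 1, 1, 0⟩ := rfl

@[simp]
theorem continuants_concat (l : List ℕ+) (a : ℕ+) :
    continuants (l ++ [a]) =
      ⟨a * (continuants l).num + (continuants l).prevNum,
        a * (continuants l).den + (continuants l).prevDen,
        (continuants l).num, (continuants l).den⟩ := by
  simp [continuants]

theorem one_le_den_continuants (l : List ℕ+) : 1 ≤ (continuants l).den := by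
  induction l using List.reverseRecOn with
  | nil => simp
  | append_singleton l a ih =>
    rw [continuants_concat]
    exact ih.trans (Nat.le_add_right_of_le (Nat.le_mul_of_pos_left _ a.pos))

theorem continuants_det (l : List ℕ+) :
    ((continuants l).prevNum : ℤ) * (continuants l).den -
      (continuants l).num * (continuants l).prevDen = (-1) ^ l.length := by
  induction l using List.reverseRecOn with
  | nil => simp
  | append_singleton l a ih =>
    rw [continuants_concat, List.length_append, List.length_singleton, pow_succ, ← ih]
    push_cast
    ring

theorem cfInvBranch_eq_div (l : List ℕ+) {t : ℝ} (ht : 0 ≤ t) :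
    cfInvBranch l t = ((continuants l).num + (continuants l).prevNum * t) /
      ((continuants l).den + (continuants l).prevDen * t) := by
  induction l using List.reverseRecOn generalizing t with
  | nil => simp [cfInvBranch]
  | append_singleton l a ih =>
    have ha : (1 : ℝ) ≤ (a : ℝ) := by exact_mod_cast a.pos
    have hq : (1 : ℝ) ≤ (continuants l).den := by exact_mod_cast one_le_den_continuants l
    rw [cfInvBranch, List.foldr_append, ← cfInvBranch, List.foldr_cons, List.foldr_nil,
      ih (by positivity), continuants_concat]
    push_cast
    field_simp
    ring

theorem cfVal_reverse (l : List ℕ+) :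
    cfVal l.reverse = (continuants l).prevDen / (continuants l).den := by
  induction l using List.reverseRecOn with
  | nil => simp [cfVal]
  | append_singleton l a ih =>
    have hq : (1 : ℝ) ≤ (continuants l).den := by exact_mod_cast one_le_den_continuants l
    rw [List.reverse_append, List.reverse_singleton, List.singleton_append, cfVal, ih,
      continuants_concat]
    push_cast
    field_simp

noncomputable def cylinderLength (l : List ℕ+) : ℝ :=
  1 / ((continuants l).den * ((continuants l).den + (continuants l).prevDen))

theorem abs_cfInvBranch_one_sub_zero (l : List ℕ+) :
    |cfInvBranch l 1 - cfInvBranch l 0| = cylinderLength l := by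
  have hq : (1 : ℝ) ≤ (continuants l).den := by exact_mod_cast one_le_den_continuants l
  have hdet : ((continuants l).prevNum : ℝ) * (continuants l).den -
      (continuants l).num * (continuants l).prevDen = (-1) ^ l.length := by
    exact_mod_cast continuants_det l
  have hdiff : cfInvBranch l 1 - cfInvBranch l 0 = (-1) ^ l.length * cylinderLength l := by
    rw [cfInvBranch_eq_div l zero_le_one, cfInvBranch_eq_div l le_rfl, cylinderLength, ← hdet]
    field_simp
    ring
  rw [hdiff, abs_mul, abs_pow, abs_neg, abs_one, one_pow, one_mul,
    abs_of_pos (by rw [cylinderLength]; positivity)]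

theorem cylinderLength_concat (l : List ℕ+) (a : ℕ+) :
    cylinderLength (l ++ [a]) =
      (cfVal l.reverse + 1) / ((cfVal l.reverse + a) * (cfVal l.reverse + a + 1)) *
        cylinderLength l := by
  have hq : (1 : ℝ) ≤ (continuants l).den := by exact_mod_cast one_le_den_continuants l
  have ha : (1 : ℝ) ≤ (a : ℝ) := by exact_mod_cast a.pos
  rw [cylinderLength, cylinderLength, cfVal_reverse, continuants_concat]
  push_cast
  field_simp
  ring

theorem forall_cfDigit_eq_iff_mem_uIoo {n : ℕ} (d : Fin n → ℕ+) {x : ℝ} (hx : x ∈ Ioo 0 1)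
    (hirr : Irrational x) :
    (∀ k : Fin n, cfDigit k x = (d k : ℕ)) ↔
      x ∈ uIoo (cfInvBranch (List.ofFn d) 0) (cfInvBranch (List.ofFn d) 1) := by
  induction n generalizing x with
  | zero => simp [cfInvBranch, hx]
  | succ n ih =>
    have hu := cfInvBranch_mem_Icc (List.ofFn fun k => d k.succ) (t := 0) (by simp)
    have hv := cfInvBranch_mem_Icc (List.ofFn fun k => d k.succ) (t := 1) (by simp)
    have ha : (1 : ℝ) ≤ (d 0 : ℝ) := by exact_mod_cast (d 0).pos
    rw [Fin.forall_fin_succ, List.ofFn_succ]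
    simp only [Fin.val_zero, Fin.val_succ, cfDigit_succ]
    rw [ih _ (gaussMap_mem_Ioo hirr) (irrational_gaussMap hirr), cfDigit_zero, gaussMap,
      floor_eq_and_fract_mem_iff ((uIoo_subset_Ioo hu hv).trans Ioo_subset_Ico_self),
      Int.cast_natCast, sub_mem_uIoo_iff,
      inv_mem_uIoo_iff (by linarith [hu.1]) (by linarith [hv.1]) hx.1]
    rfl

def cfCylinder {n : ℕ} (d : Fin n → ℕ+) : Set ℝ :=
  {x : ℝ | x ∈ Set.Ioo (0 : ℝ) 1 ∧ Irrational x ∧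
    ∀ k : Fin n, cfDigit (k : ℕ) x = ((d k : ℕ) : ℤ)}

theorem cfCylinder_eq_uIoo_inter {n : ℕ} (d : Fin n → ℕ+) :
    cfCylinder d = uIoo (cfInvBranch (List.ofFn d) 0) (cfInvBranch (List.ofFn d) 1) ∩
      {x | Irrational x} := by
  ext x
  constructor
  · rintro ⟨hx, hirr, hd⟩
    exact ⟨(forall_cfDigit_eq_iff_mem_uIoo d hx hirr).1 hd, hirr⟩
  · rintro ⟨hmem, hirr⟩
    have hx : x ∈ Ioo 0 1 := uIoo_subset_Ioo (cfInvBranch_mem_Icc _ (by simp))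
      (cfInvBranch_mem_Icc _ (by simp)) hmem
    exact ⟨hx, hirr, (forall_cfDigit_eq_iff_mem_uIoo d hx hirr).2 hmem⟩

theorem volume_cfCylinder {n : ℕ} (d : Fin n → ℕ+) :
    volume (cfCylinder d) = ENNReal.ofReal (cylinderLength (List.ofFn d)) := by
  rw [cfCylinder_eq_uIoo_inter, volume_inter_setOf_irrational, Real.volume_uIoo,
    abs_cfInvBranch_one_sub_zero]

theorem cfCylinder_snoc {n : ℕ} (d : Fin n → ℕ+) (i : ℕ+) :
    cfCylinder (Fin.snoc d i : Fin (n + 1) → ℕ+) =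
      {x : ℝ | x ∈ Set.Ioo (0 : ℝ) 1 ∧ Irrational x ∧
        (∀ k : Fin n, cfDigit (k : ℕ) x = ((d k : ℕ) : ℤ)) ∧ cfDigit n x = ((i : ℕ) : ℤ)} := by
  ext x
  simp [cfCylinder, Fin.forall_fin_succ', and_assoc]

theorem volume_cylinder_succ_general (n : ℕ) (d : Fin n → ℕ+) (i : ℕ+)
    (s : ℝ) (hs : s = cfVal ((List.ofFn d).reverse)) :
    volume {x : ℝ | x ∈ Set.Ioo (0 : ℝ) 1 ∧ Irrational x ∧
        (∀ k : Fin n, cfDigit (k : ℕ) x = ((d k : ℕ) : ℤ)) ∧ cfDigit n x = ((i : ℕ) : ℤ)} =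
      ENNReal.ofReal ((s + 1) / ((s + (i : ℝ)) * (s + (i : ℝ) + 1))) *
        volume {x : ℝ | x ∈ Set.Ioo (0 : ℝ) 1 ∧ Irrational x ∧
          ∀ k : Fin n, cfDigit (k : ℕ) x = ((d k : ℕ) : ℤ)} := by
  have hs₀ : 0 ≤ s := hs ▸ cfVal_nonneg _
  rw [← cfCylinder_snoc, ← cfCylinder, volume_cfCylinder, volume_cfCylinder, List.ofFn_snoc,
    cylinderLength_concat, ← hs, ENNReal.ofReal_mul (by positivity)]

/-- For any `n ≥ 1`, positive integers `i₁, …, iₙ` and a positive integer `i`, the Lebesgue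
measure of the cylinder `{x ∈ (0,1) irrational : a₁(x)=i₁, …, aₙ(x)=iₙ, a_{n+1}(x)=i}` equals
`P_i(s)` times the Lebesgue measure of `{x ∈ (0,1) irrational : a₁(x)=i₁, …, aₙ(x)=iₙ}`,
where `s = [iₙ, …, i₁]` and `P_i(s) = (s+1)/((s+i)(s+i+1))`. -/
theorem volume_cylinder_succ (n : ℕ) (hn : 1 ≤ n) (d : Fin n → ℕ+) (i : ℕ+)
    (s : ℝ) (hs : s = cfVal ((List.ofFn d).reverse)) :
    volume {x : ℝ | x ∈ Set.Ioo (0 : ℝ) 1 ∧ Irrational x ∧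
        (∀ k : Fin n, cfDigit (k : ℕ) x = ((d k : ℕ) : ℤ)) ∧ cfDigit n x = ((i : ℕ) : ℤ)} =
      ENNReal.ofReal ((s + 1) / ((s + (i : ℝ)) * (s + (i : ℝ) + 1))) *
        volume {x : ℝ | x ∈ Set.Ioo (0 : ℝ) 1 ∧ Irrational x ∧
          ∀ k : Fin n, cfDigit (k : ℕ) x = ((d k : ℕ) : ℤ)} :=
  volume_cylinder_succ_general n d i s hs
end

section
/- The Gauss measure is stationary for the transition kernel of the chain sₙ: for every u with 0 < u ≤ 1, ∫₀¹ Q(x, [0,u)) γ(dx) = γ([0,u)) = log(1+u)/log 2, where Q(x, [0,u)) = ∑_{i ≥ 1, 1/(x+i) < u} (x+1)/((x+i)(x+i+1)). -/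
/-!
Since `P_i(x) = (x + 1) (1/(x + i) - 1/(x + i + 1))`, the sum `Q(x, [0, u))` telescopes to
`(x + 1)/(x + k)`, where `k` is the least index with `x + k > t := 1/u`; that is,
`x + k = t + 1 - {t - x}`. Against the Gauss density `1/((x + 1) log 2)` the factor `x + 1`
cancels, and since `{t - x}` is `1`-periodic in `x`, integrating over `[0, 1]` gives
`∫₀¹ ds/(t + 1 - s) = log (1 + u)`.
-/

open MeasureTheory

noncomputable def gaussMeasure : Measure ℝ :=
  (volume.restrict (Set.Icc (0 : ℝ) 1)).withDensity
    (fun x => ENNReal.ofReal ((1 / Real.log 2) * (1 / (x + 1))))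

open Real Filter Topology

lemma hasSum_sub_succ_of_antitone {g : ℕ → ℝ} (hg : Antitone g)
    (hlim : Tendsto g atTop (𝓝 0)) :
    HasSum (fun m => g m - g (m + 1)) (g 0) := by
  rw [hasSum_iff_tendsto_nat_of_nonneg fun m => sub_nonneg.2 (hg m.le_succ),
    funext (Finset.sum_range_sub' g)]
  simpa using hlim.const_sub (g 0)

lemma hasSum_one_div_mul_add_one {a : ℝ} (ha : 0 < a) :
    HasSum (fun m : ℕ => 1 / ((a + m) * (a + m + 1))) (1 / a) := by
  have hanti : Antitone fun m : ℕ => 1 / (a + m) := fun m n hmn =>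
    one_div_le_one_div_of_le (by positivity) (by gcongr)
  have hlim : Tendsto (fun m : ℕ => 1 / (a + m)) atTop (𝓝 0) :=
    tendsto_const_nhds.div_atTop (tendsto_atTop_add_const_left _ a tendsto_natCast_atTop_atTop)
  convert hasSum_sub_succ_of_antitone hanti hlim using 1
  · funext m
    have : 0 < a + m := by positivity
    push_cast
    field_simp
    ring
  · simp

lemma hasSum_pnat_ite_lt {G : Type*} [AddCommGroup G] [TopologicalSpace G]
    [IsTopologicalAddGroup G] {f : ℕ → G} {s : G} (k : ℕ)
    (h : HasSum (fun m => f (m + k + 1)) s) :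
    HasSum (fun i : ℕ+ => if k < (i : ℕ) then f i else 0) s := by
  rw [← Equiv.pnatEquivNat.symm.hasSum_iff, ← hasSum_nat_add_iff' k]
  have hzero : ∑ i ∈ Finset.range k, (if k ≤ i then f (i + 1) else 0) = 0 :=
    Finset.sum_eq_zero fun i hi => if_neg (by simpa using hi)
  simpa [Function.comp_def, Nat.lt_succ_iff, hzero] using h

/-- `kernelIco u x` is `Q(x, [0, u))`. -/
noncomputable def kernelIco (u x : ℝ) : ℝ :=
  ∑' i : ℕ+, if 1 / (x + i) < u then (x + 1) / ((x + i) * (x + i + 1)) else 0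

lemma kernelIco_eq {u x : ℝ} (hu : 0 < u) (hx : 0 ≤ x) (hxu : x ≤ u⁻¹) :
    kernelIco u x = (x + 1) / (u⁻¹ + 1 - Int.fract (u⁻¹ - x)) := by
  set k := ⌊u⁻¹ - x⌋₊
  have hcond (i : ℕ+) : 1 / (x + i) < u ↔ k < (i : ℕ) := by
    rw [one_div_lt (by positivity) hu, Nat.floor_lt (sub_nonneg.2 hxu), one_div,
      sub_lt_iff_lt_add']
  have hk : (k : ℝ) = u⁻¹ - x - Int.fract (u⁻¹ - x) := by
    rw [natCast_floor_eq_intCast_floor (sub_nonneg.2 hxu), ← Int.self_sub_floor, sub_sub_cancel]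
  have htail : HasSum (fun m : ℕ => (x + 1) / ((x + ↑(m + k + 1)) * (x + ↑(m + k + 1) + 1)))
      ((x + 1) / (x + k + 1)) := by
    have h := (hasSum_one_div_mul_add_one (a := x + k + 1) (by positivity)).mul_left (x + 1)
    rw [mul_one_div] at h
    refine h.congr_fun fun m => ?_
    simp only [Nat.cast_add, Nat.cast_one]
    ring
  simp_rw [kernelIco, hcond]
  rw [(hasSum_pnat_ite_lt (f := fun n : ℕ => (x + 1) / ((x + n) * (x + n + 1))) k htail).tsum_eq,
    hk]
  congr 1
  ring

lemma integral_comp_fract_sub (h : ℝ → ℝ) (t : ℝ) :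
    ∫ x in (0 : ℝ)..1, h (Int.fract (t - x)) = ∫ x in (0 : ℝ)..1, h x := by
  have hper : Function.Periodic (fun y => h (Int.fract y)) 1 := (Int.fract_periodic ℝ).comp h
  rw [intervalIntegral.integral_comp_sub_left (fun y => h (Int.fract y)) t, sub_zero,
    ← sub_add_cancel t 1, add_sub_cancel_right, hper.intervalIntegral_add_eq (t - 1) 0, zero_add,
    intervalIntegral.integral_of_le zero_le_one, intervalIntegral.integral_of_le zero_le_one,
    integral_Ioc_eq_integral_Ioo, integral_Ioc_eq_integral_Ioo]
  exact setIntegral_congr_fun measurableSet_Ioo fun x hx => by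
    rw [Int.fract_eq_self.2 ⟨hx.1.le, hx.2⟩]

lemma integral_gaussMeasure (f : ℝ → ℝ) :
    ∫ x, f x ∂gaussMeasure = ∫ x in (0 : ℝ)..1, f x / (log 2 * (x + 1)) := by
  have hmeas : Measurable fun x : ℝ => (1 / log 2 * (1 / (x + 1))).toNNReal :=
    Measurable.real_toNNReal (by fun_prop)
  refine (integral_withDensity_eq_integral_smul hmeas f).trans ?_
  rw [intervalIntegral.integral_of_le zero_le_one, ← integral_Icc_eq_integral_Ioc]
  refine setIntegral_congr_fun measurableSet_Icc fun x hx => ?_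
  have hx1 : 0 < x + 1 := by linarith [hx.1]
  rw [NNReal.smul_def, Real.coe_toNNReal _ (by positivity), smul_eq_mul]
  field_simp

lemma gaussMeasure_Ico {a b : ℝ} (ha : 0 ≤ a) (hab : a ≤ b) (hb : b ≤ 1) :
    gaussMeasure (Set.Ico a b) = ENNReal.ofReal (log ((1 + b) / (1 + a)) / log 2) := by
  have hsub : Set.Ico a b ⊆ Set.Icc 0 1 := fun x hx => ⟨ha.trans hx.1, hx.2.le.trans hb⟩
  have hcont : ContinuousOn (fun x : ℝ => 1 / log 2 * (1 / (x + 1))) (Set.Icc a b) :=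
    continuousOn_const.mul (continuousOn_const.div (by fun_prop) fun x hx => by linarith [hx.1])
  have hnn : 0 ≤ᵐ[volume.restrict (Set.Ico a b)] fun x : ℝ => 1 / log 2 * (1 / (x + 1)) := by
    filter_upwards [ae_restrict_mem measurableSet_Ico] with x hx
    have : 0 < x + 1 := by linarith [hx.1]
    positivity
  rw [gaussMeasure, withDensity_apply _ measurableSet_Ico,
    Measure.restrict_restrict measurableSet_Ico, Set.inter_eq_self_of_subset_left hsub,
    ← ofReal_integral_eq_lintegral_ofReal
      (hcont.integrableOn_Icc.mono_set Set.Ico_subset_Icc_self) hnn,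
    integral_Ico_eq_integral_Ioo, ← integral_Ioc_eq_integral_Ioo,
    ← intervalIntegral.integral_of_le hab, intervalIntegral.integral_const_mul,
    intervalIntegral.integral_comp_add_right (fun x => 1 / x),
    integral_one_div_of_pos (by linarith) (by linarith), add_comm a, add_comm b,
    one_div_mul_eq_div]

/-- The Gauss measure is stationary for the transition kernel `Q` of the chain `(sₙ)`:
for `0 < u ≤ 1`, `∫₀¹ Q(x,[0,u)) γ(dx) = γ([0,u)) = log(1+u)/log 2`, where
`Q(x,[0,u)) = ∑_{i ≥ 1, 1/(x+i) < u} (x+1)/((x+i)(x+i+1))`. -/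
theorem gaussMeasure_stationary_for_Q (u : ℝ) (hu : 0 < u) (hu1 : u ≤ 1) :
    (∫ x, (∑' i : ℕ+, if 1 / (x + (i : ℝ)) < u then
        (x + 1) / ((x + (i : ℝ)) * (x + (i : ℝ) + 1)) else 0) ∂gaussMeasure) =
      Real.log (1 + u) / Real.log 2 ∧
    gaussMeasure (Set.Ico (0 : ℝ) u) = ENNReal.ofReal (Real.log (1 + u) / Real.log 2) := by
  refine ⟨?_, by simpa using gaussMeasure_Ico le_rfl hu.le hu1⟩
  have hu_inv : 1 ≤ u⁻¹ := (one_le_inv₀ hu).2 hu1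
  calc ∫ x, kernelIco u x ∂gaussMeasure
      = ∫ x in (0 : ℝ)..1, 1 / log 2 * (1 / (u⁻¹ + 1 - Int.fract (u⁻¹ - x))) := by
        rw [integral_gaussMeasure]
        refine intervalIntegral.integral_congr fun x hx => ?_
        rw [Set.uIcc_of_le zero_le_one] at hx
        have hx1 : 0 < x + 1 := by linarith [hx.1]
        have hden : 0 < u⁻¹ + 1 - Int.fract (u⁻¹ - x) := by
          linarith [Int.fract_lt_one (u⁻¹ - x)]
        rw [kernelIco_eq hu hx.1 (hx.2.trans hu_inv)]
        field_simp
    _ = 1 / log 2 * ∫ s in (0 : ℝ)..1, 1 / (u⁻¹ + 1 - s) := by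
        rw [intervalIntegral.integral_const_mul,
          integral_comp_fract_sub (fun s => 1 / (u⁻¹ + 1 - s))]
    _ = log (1 + u) / log 2 := by
        rw [intervalIntegral.integral_comp_sub_left (fun s => 1 / s),
          integral_one_div_of_pos (by linarith) (by linarith)]
        have hratio : (u⁻¹ + 1 - 0) / (u⁻¹ + 1 - 1) = 1 + u := by field_simp; ring
        rw [hratio, one_div_mul_eq_div]
end
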